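/- For every n ≥ 1, the QBF P_n.(φ_n ∧ ψ_n), where P_n.φ_n = KBKF_n and ψ_n = (x̄_1∨y_1) ∧ … ∧ (x̄_n∨y_n), has a Q-Res refutation (derivation of the empty clause using rules A, R, U) of length at most 4n (not counting applications of the axiom rule A). -/

import Mathlib

/-! Generic framework for QBFs in prenex CNF. -/

inductive Q
  | ex
  | all
deriving DecidableEq

abbrev Lit (V : Type) := V × Bool
abbrev Clause (V : Type) := Finset (Lit V)
abbrev Cnf (V : Type) := Finset (Clause V)
abbrev QPrefix (V : Type) := List (Q × V)

variable {V : Type} [DecidableEq V]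

/-- Negation of a literal. -/
def negLit (l : Lit V) : Lit V := (l.1, !l.2)

/-- Evaluation of a literal under an assignment. -/
def evalLit (τ : V → Bool) (l : Lit V) : Bool := if l.2 then τ l.1 else !(τ l.1)

/-- An assignment satisfies a clause if some literal evaluates to true. -/
def SatClause (τ : V → Bool) (C : Clause V) : Prop := ∃ l ∈ C, evalLit τ l = true

/-- An assignment satisfies a CNF if it satisfies all clauses. -/
def SatCnf (τ : V → Bool) (φ : Cnf V) : Prop := ∀ C ∈ φ, SatClause τ C

/-- Recursive semantics of a quantifier prefix over a matrix predicate. -/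
def QTrue : QPrefix V → (V → Bool) → ((V → Bool) → Prop) → Prop
  | [], τ, M => M τ
  | (Q.ex, v) :: P, τ, M => ∃ b, QTrue P (Function.update τ v b) M
  | (Q.all, v) :: P, τ, M => ∀ b, QTrue P (Function.update τ v b) M

/-- Truth of a prenex CNF QBF (closed; the default assignment is irrelevant). -/
def QBFTrue (P : QPrefix V) (φ : Cnf V) : Prop :=
  QTrue P (fun _ => false) (fun τ => SatCnf τ φ)

/-- Two variables are in the same quantifier block of a prefix. -/
def SameBlock (P : QPrefix V) (v w : V) : Prop :=
  ∃ i j : ℕ, (∃ q : Q, P[i]? = some (q, v)) ∧ (∃ q : Q, P[j]? = some (q, w)) ∧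
    ∀ (k₁ k₂ : ℕ) (e₁ e₂ : Q × V), min i j ≤ k₁ → k₁ ≤ k₂ → k₂ ≤ max i j →
      P[k₁]? = some e₁ → P[k₂]? = some e₂ → e₁.1 = e₂.1

/-- An admissible literal map for a prefix: a bijection on literals commuting with
negation and moving variables only within their quantifier block. -/
structure Admissible (P : QPrefix V) (σ : Lit V → Lit V) : Prop where
  bij : Function.Bijective σ
  neg : ∀ l, σ (negLit l) = negLit (σ l)
  block : ∀ v w b c, σ (v, b) = (w, c) → v ≠ w → SameBlock P v w

/-- Action of a literal map on a clause. -/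
def mapClause (σ : Lit V → Lit V) (C : Clause V) : Clause V := C.image σ

/-- A (syntactic) symmetry of a QBF: an admissible map sending the clause set to itself. -/
def IsSymmetry (P : QPrefix V) (φ : Cnf V) (σ : Lit V → Lit V) : Prop :=
  Admissible P σ ∧ φ.image (mapClause σ) = φ

def IsExist (P : QPrefix V) (v : V) : Prop := (Q.ex, v) ∈ P
def IsUniv (P : QPrefix V) (v : V) : Prop := (Q.all, v) ∈ P

/-- A clause is a tautology if it contains complementary literals. -/
def Tauto (C : Clause V) : Prop := ∃ l ∈ C, negLit l ∈ C

/-- Rule R of Q-Res: resolution over an existential variable, with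
non-tautological resolvent. -/
def ResStep (P : QPrefix V) (E₁ E₂ E : Clause V) : Prop :=
  ∃ x, IsExist P x ∧ (x, true) ∈ E₁ ∧ (x, false) ∈ E₂ ∧
    E = E₁.erase (x, true) ∪ E₂.erase (x, false) ∧ ¬ Tauto E

/-- Prefix order on variables: `v` occurs strictly before `w`. -/
def LtP (P : QPrefix V) (v w : V) : Prop :=
  ∃ i j : ℕ, i < j ∧ (∃ q : Q, P[i]? = some (q, v)) ∧ (∃ q : Q, P[j]? = some (q, w))

/-- Rule U of Q-Res: universal reduction. -/
def URed (P : QPrefix V) (F₁ F : Clause V) : Prop :=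
  ∃ l, IsUniv P l.1 ∧ l ∈ F₁ ∧ negLit l ∉ F₁ ∧ F = F₁.erase l ∧
    ∀ k ∈ F₁.erase l, IsExist P k.1 → LtP P k.1 l.1

/-- Derivability in Q-Res (rules A, R, U). -/
inductive Derives (P : QPrefix V) (φ : Cnf V) : Clause V → Prop
  | ax {C : Clause V} : C ∈ φ → Derives P φ C
  | res {E₁ E₂ E : Clause V} :
      Derives P φ E₁ → Derives P φ E₂ → ResStep P E₁ E₂ E → Derives P φ E
  | ured {F₁ F : Clause V} : Derives P φ F₁ → URed P F₁ F → Derives P φ F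

/-- Derivability in Q-Res+S (rules A, R, U, S). -/
inductive DerivesS (P : QPrefix V) (φ : Cnf V) : Clause V → Prop
  | ax {C : Clause V} : C ∈ φ → DerivesS P φ C
  | res {E₁ E₂ E : Clause V} :
      DerivesS P φ E₁ → DerivesS P φ E₂ → ResStep P E₁ E₂ E → DerivesS P φ E
  | ured {F₁ F : Clause V} : DerivesS P φ F₁ → URed P F₁ F → DerivesS P φ F
  | sym {C : Clause V} {σ : Lit V → Lit V} :
      DerivesS P φ C → IsSymmetry P φ σ → DerivesS P φ (mapClause σ C)

/-- A clause available at step `i` of a derivation sequence: an input clause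
(axiom rule A, not counted as a step) or an earlier line. -/
def Avail (φ : Cnf V) (D : List (Clause V)) (i : ℕ) (C : Clause V) : Prop :=
  C ∈ φ ∨ ∃ j, ∃ _ : j < i, ∃ hj : j < D.length, D[j]'hj = C

/-- Line `C` at position `i` is justified by rule R or U from available clauses. -/
def StepOK (P : QPrefix V) (φ : Cnf V) (D : List (Clause V)) (i : ℕ) (C : Clause V) : Prop :=
  (∃ E₁ E₂, Avail φ D i E₁ ∧ Avail φ D i E₂ ∧ ResStep P E₁ E₂ C) ∨
  (∃ F₁, Avail φ D i F₁ ∧ URed P F₁ C)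

/-- Line justified by rule R, U or the symmetry rule S. -/
def StepOKS (P : QPrefix V) (φ : Cnf V) (D : List (Clause V)) (i : ℕ) (C : Clause V) : Prop :=
  StepOK P φ D i C ∨
  (∃ F₁ σ, Avail φ D i F₁ ∧ IsSymmetry P φ σ ∧ C = mapClause σ F₁)

/-- A Q-Res refutation, as a sequence of R/U steps ending in the empty clause;
its length is the number of R and U applications. -/
def IsRefutation (P : QPrefix V) (φ : Cnf V) (D : List (Clause V)) : Prop :=
  (∀ i (hi : i < D.length), StepOK P φ D i (D[i]'hi)) ∧ D.getLast? = some (∅ : Clause V)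

/-- A Q-Res+S refutation. -/
def IsRefutationS (P : QPrefix V) (φ : Cnf V) (D : List (Clause V)) : Prop :=
  (∀ i (hi : i < D.length), StepOKS P φ D i (D[i]'hi)) ∧ D.getLast? = some (∅ : Clause V)

/-- A derivation sequence using rules A, R, U: every line is an input clause or
follows from earlier lines by R or U. -/
def IsDerivation (P : QPrefix V) (φ : Cnf V) (D : List (Clause V)) : Prop :=
  ∀ i (hi : i < D.length), (D[i]'hi) ∈ φ ∨
    (∃ j k, ∃ hj : j < i, ∃ hk : k < i,
      ResStep P (D[j]'(Nat.lt_trans hj hi)) (D[k]'(Nat.lt_trans hk hi)) (D[i]'hi)) ∨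
    (∃ j, ∃ hj : j < i, URed P (D[j]'(Nat.lt_trans hj hi)) (D[i]'hi))

/-! The KBKF formula family (variables indexed 1..n). -/

inductive KV
  | x (i : ℕ)
  | y (i : ℕ)
  | a (i : ℕ)
  | z (i : ℕ)
deriving DecidableEq

/-- Prefix ∃x₁y₁∀a₁ … ∃xₙyₙ∀aₙ ∃z₁…zₙ. -/
def kPrefix (n : ℕ) : QPrefix KV :=
  ((List.range n).flatMap
    (fun j => [(Q.ex, KV.x (j+1)), (Q.ex, KV.y (j+1)), (Q.all, KV.a (j+1))])) ++
  (List.range n).map (fun j => (Q.ex, KV.z (j+1)))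

/-- The tail z̄₁ ∨ … ∨ z̄ₙ. -/
def kZneg (n : ℕ) : Clause KV := (Finset.range n).image (fun j => ((KV.z (j+1), false) : Lit KV))

/-- The clauses of KBKF_n. -/
def kbkf (n : ℕ) : Cnf KV :=
  {({(KV.x 1, false), (KV.y 1, false)} : Clause KV)} ∪
  ((Finset.range (n-1)).image (fun j =>
    ({(KV.x (j+1), true), (KV.a (j+1), false), (KV.x (j+2), false), (KV.y (j+2), false)} : Clause KV))) ∪
  ((Finset.range (n-1)).image (fun j =>
    ({(KV.y (j+1), true), (KV.a (j+1), true), (KV.x (j+2), false), (KV.y (j+2), false)} : Clause KV))) ∪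
  {({(KV.x n, true), (KV.a n, false)} : Clause KV) ∪ kZneg n,
   ({(KV.y n, true), (KV.a n, true)} : Clause KV) ∪ kZneg n} ∪
  ((Finset.range n).image (fun j => ({(KV.a (j+1), true), (KV.z (j+1), true)} : Clause KV))) ∪
  ((Finset.range n).image (fun j => ({(KV.a (j+1), false), (KV.z (j+1), true)} : Clause KV)))

/-- The symmetry σᵢ = (xᵢ yᵢ)(x̄ᵢ ȳᵢ)(aᵢ āᵢ) of KBKF_n. -/
def kSigma (i : ℕ) : Lit KV → Lit KV
  | (KV.x j, b) => if j = i then (KV.y j, b) else (KV.x j, b)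
  | (KV.y j, b) => if j = i then (KV.x j, b) else (KV.y j, b)
  | (KV.a j, b) => if j = i then (KV.a j, !b) else (KV.a j, b)
  | (KV.z j, b) => (KV.z j, b)

/-- The symmetry breaker ψₙ = (x̄₁∨y₁) ∧ … ∧ (x̄ₙ∨yₙ) for KBKF_n. -/
def kPsi (n : ℕ) : Cnf KV :=
  (Finset.range n).image (fun j => ({(KV.x (j+1), false), (KV.y (j+1), true)} : Clause KV))

/-! The QUPARITY formula family. -/

inductive PV
  | x (i : ℕ)
  | a (i : ℕ)
  | y (i : ℕ)
deriving DecidableEq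

/-- Prefix ∃x₁…xₙ ∀a₁a₂ ∃y₂…yₙ. -/
def pPrefix (n : ℕ) : QPrefix PV :=
  (List.range n).map (fun j => ((Q.ex, PV.x (j+1)) : Q × PV)) ++
  [(Q.all, PV.a 1), (Q.all, PV.a 2)] ++
  (List.range (n-1)).map (fun k => ((Q.ex, PV.y (k+2)) : Q × PV))

/-- a₁ ∨ a₂ with sign `s` (s = true: unprimed clauses, s = false: primed clauses). -/
def pAA (s : Bool) : Clause PV := {(PV.a 1, s), (PV.a 2, s)}

/-- The clauses of QUPARITY_n. -/
def quparity (n : ℕ) : Cnf PV :=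
  ((Finset.univ : Finset Bool).biUnion (fun s =>
    ({({(PV.x 1, false), (PV.x 2, false), (PV.y 2, false)} : Clause PV) ∪ pAA s,
      ({(PV.x 1, false), (PV.x 2, true), (PV.y 2, true)} : Clause PV) ∪ pAA s,
      ({(PV.x 1, true), (PV.x 2, false), (PV.y 2, true)} : Clause PV) ∪ pAA s,
      ({(PV.x 1, true), (PV.x 2, true), (PV.y 2, false)} : Clause PV) ∪ pAA s} : Cnf PV) ∪
    ((Finset.range (n-2)).biUnion (fun k =>
      ({({(PV.y (k+2), false), (PV.x (k+3), false), (PV.y (k+3), false)} : Clause PV) ∪ pAA s,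
        ({(PV.y (k+2), false), (PV.x (k+3), true), (PV.y (k+3), true)} : Clause PV) ∪ pAA s,
        ({(PV.y (k+2), true), (PV.x (k+3), false), (PV.y (k+3), true)} : Clause PV) ∪ pAA s,
        ({(PV.y (k+2), true), (PV.x (k+3), true), (PV.y (k+3), false)} : Clause PV) ∪ pAA s} : Cnf PV))))) ∪
  {({(PV.a 1, true), (PV.a 2, true), (PV.y n, true)} : Clause PV),
   ({(PV.a 1, false), (PV.a 2, false), (PV.y n, false)} : Clause PV)}

/-- The symmetry σ₁ = (x₁ x₂)(x̄₁ x̄₂) of QUPARITY_n. -/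
def pSigma1 : Lit PV → Lit PV
  | (PV.x 1, b) => (PV.x 2, b)
  | (PV.x 2, b) => (PV.x 1, b)
  | l => l

/-- The symmetry σᵢ = (xᵢ x̄ᵢ)(a₁ ā₁)(a₂ ā₂)(yᵢ ȳᵢ)⋯(yₙ ȳₙ) of QUPARITY_n, 2 ≤ i ≤ n. -/
def pSigma (n i : ℕ) : Lit PV → Lit PV
  | (PV.x j, b) => if j = i then (PV.x j, !b) else (PV.x j, b)
  | (PV.a j, b) => if j = 1 ∨ j = 2 then (PV.a j, !b) else (PV.a j, b)
  | (PV.y j, b) => if i ≤ j ∧ j ≤ n then (PV.y j, !b) else (PV.y j, b)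

/-- The symmetry breaker ψₙ = (x̄₁ ∨ x₂) ∧ x̄₂ ∧ … ∧ x̄ₙ for QUPARITY_n. -/
def pPsi (n : ℕ) : Cnf PV :=
  {({(PV.x 1, false), (PV.x 2, true)} : Clause PV)} ∪
  (Finset.range (n-1)).image (fun k => ({(PV.x (k+2), false)} : Clause PV))

/-! The modified family KBKF'_n with blocking universal variables b_j. -/

inductive KV2
  | x (i : ℕ)
  | b (i : ℕ)
  | y (i : ℕ)
  | a (i : ℕ)
  | z (i : ℕ)
deriving DecidableEq

/-- Prefix ∃x₁∀b₁∃y₁∀a₁ … ∃xₙ∀bₙ∃yₙ∀aₙ ∃z₁…zₙ of KBKF'_n. -/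
def k2Prefix (n : ℕ) : QPrefix KV2 :=
  ((List.range n).flatMap
    (fun j => [(Q.ex, KV2.x (j+1)), (Q.all, KV2.b (j+1)),
               (Q.ex, KV2.y (j+1)), (Q.all, KV2.a (j+1))])) ++
  (List.range n).map (fun j => (Q.ex, KV2.z (j+1)))

/-- The map σᵢ = (xᵢ yᵢ)(x̄ᵢ ȳᵢ)(aᵢ āᵢ) on the literals of KBKF'_n. -/
def k2Sigma (i : ℕ) : Lit KV2 → Lit KV2
  | (KV2.x j, c) => if j = i then (KV2.y j, c) else (KV2.x j, c)
  | (KV2.y j, c) => if j = i then (KV2.x j, c) else (KV2.y j, c)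
  | (KV2.a j, c) => if j = i then (KV2.a j, !c) else (KV2.a j, c)
  | (KV2.b j, c) => (KV2.b j, c)
  | (KV2.z j, c) => (KV2.z j, c)

/-! Resolving the breaker clause `x̄ⱼ ∨ yⱼ` on `yⱼ` with `C₁` (for `j = 1`) or with `C_{2j-2}` gives
`x̄₁` and `x_{j-1} ∨ ā_{j-1} ∨ x̄ⱼ`, so the clauses `C_{2j-1}`, with their positive `a`-literals,
are never used and only negative `a`-literals accumulate. Resolving `z₁, …, zₙ` out of `C_{2n}`
with `B₂, …, B_{2n}` gives `xₙ ∨ ā₁ ∨ … ∨ āₙ` in `n` steps; two steps per level turn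
`x_{j+1} ∨ ā₁ ∨ … ∨ āₙ` into `xⱼ ∨ ā₁ ∨ … ∨ āₙ`, two more give `ā₁ ∨ … ∨ āₙ`, and `n` universal
reductions empty it: `n + 2(n-1) + 2 + n = 4n` steps. -/

section QRes

variable {P : QPrefix V} {φ : Cnf V} {D D₁ D₂ : List (Clause V)} {C E₁ E₂ F : Clause V} {k k₁ k₂ : ℕ}

section

omit [DecidableEq V]

lemma avail_append_left {i : ℕ} :
    Avail φ D₁ i C → Avail φ (D₁ ++ D₂) i C := by
  rintro (hC | ⟨j, hji, hj, rfl⟩)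
  · exact Or.inl hC
  · exact Or.inr ⟨j, hji, by simp only [List.length_append]; omega, List.getElem_append_left hj⟩

lemma avail_append_right {i : ℕ} :
    Avail φ D₂ i C → Avail φ (D₁ ++ D₂) (D₁.length + i) C := by
  rintro (hC | ⟨j, hji, hj, rfl⟩)
  · exact Or.inl hC
  · exact Or.inr ⟨D₁.length + j, by omega, by simp only [List.length_append]; omega,
      by simp⟩

lemma avail_length_of_mem (h : C ∈ φ ∨ C ∈ D₁) : Avail φ (D₁ ++ D₂) D₁.length C := by
  rcases h with h | h
  · exact Or.inl h
  · obtain ⟨j, hj, rfl⟩ := List.getElem_of_mem h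
    exact Or.inr ⟨j, hj, by simp only [List.length_append]; omega, List.getElem_append_left hj⟩

lemma not_tauto_of_forall_snd_eq (pol : V → Bool) (h : ∀ l ∈ C, l.2 = pol l.1) :
    ¬ Tauto C := by
  rintro ⟨l, hl, hnl⟩
  have := h _ hnl
  simp [negLit, h l hl] at this

end

def StepsOK (P : QPrefix V) (φ : Cnf V) (D : List (Clause V)) : Prop :=
  ∀ i (hi : i < D.length), StepOK P φ D i D[i]

lemma StepOK.mono {D' : List (Clause V)} {i i' : ℕ}
    (h : ∀ E, Avail φ D i E → Avail φ D' i' E) : StepOK P φ D i C → StepOK P φ D' i' C := by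
  rintro (⟨E₁, E₂, h₁, h₂, hR⟩ | ⟨F, hF, hU⟩)
  · exact Or.inl ⟨E₁, E₂, h _ h₁, h _ h₂, hR⟩
  · exact Or.inr ⟨F, h _ hF, hU⟩

lemma StepsOK.append (h₁ : StepsOK P φ D₁) (h₂ : StepsOK P φ D₂) :
    StepsOK P φ (D₁ ++ D₂) := by
  intro i hi
  rcases lt_or_ge i D₁.length with h | h
  · rw [List.getElem_append_left h]
    exact (h₁ i h).mono fun _ => avail_append_left
  · obtain ⟨i, rfl⟩ := Nat.exists_eq_add_of_le h
    have hi₂ : i < D₂.length := by simp only [List.length_append] at hi; omega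
    simp only [List.getElem_append_right h, Nat.add_sub_cancel_left]
    exact (h₂ i hi₂).mono fun _ => avail_append_right

lemma StepsOK.snoc (hD : StepsOK P φ D) (hC : StepOK P φ (D ++ [C]) D.length C) :
    StepsOK P φ (D ++ [C]) := by
  intro i hi
  rcases lt_or_ge i D.length with h | h
  · rw [List.getElem_append_left h]
    exact (hD i h).mono fun _ => avail_append_left
  · obtain rfl : i = D.length := by simp only [List.length_append, List.length_singleton] at hi; omega
    simpa using hC

def DerivableIn (P : QPrefix V) (φ : Cnf V) (k : ℕ) (C : Clause V) : Prop :=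
  ∃ D, StepsOK P φ D ∧ D.length ≤ k ∧ (C ∈ φ ∨ C ∈ D)

lemma derivableIn_of_mem (h : C ∈ φ) : DerivableIn P φ 0 C :=
  ⟨[], fun _ hi => absurd hi (Nat.not_lt_zero _), le_rfl, Or.inl h⟩

lemma DerivableIn.mono (h : DerivableIn P φ k C) (hk : k ≤ k₁) : DerivableIn P φ k₁ C :=
  let ⟨D, hD, hlen, hC⟩ := h
  ⟨D, hD, hlen.trans hk, hC⟩

lemma DerivableIn.res (h₁ : DerivableIn P φ k₁ E₁) (h₂ : DerivableIn P φ k₂ E₂)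
    (hR : ResStep P E₁ E₂ C) : DerivableIn P φ (k₁ + k₂ + 1) C := by
  obtain ⟨D₁, hD₁, hlen₁, hE₁⟩ := h₁
  obtain ⟨D₂, hD₂, hlen₂, hE₂⟩ := h₂
  have hE₁' : E₁ ∈ φ ∨ E₁ ∈ D₁ ++ D₂ := hE₁.imp_right (List.mem_append_left _)
  have hE₂' : E₂ ∈ φ ∨ E₂ ∈ D₁ ++ D₂ := hE₂.imp_right (List.mem_append_right _)
  refine ⟨D₁ ++ D₂ ++ [C], (hD₁.append hD₂).snoc
    (Or.inl ⟨E₁, E₂, avail_length_of_mem hE₁', avail_length_of_mem hE₂', hR⟩), ?_, by simp⟩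
  simp only [List.length_append, List.length_singleton]
  omega

lemma exists_stepsOK_snoc_of_uRed (h : DerivableIn P φ k F) (hU : URed P F C) :
    ∃ D, StepsOK P φ (D ++ [C]) ∧ D.length ≤ k := by
  obtain ⟨D, hD, hlen, hF⟩ := h
  exact ⟨D, hD.snoc (Or.inr ⟨F, avail_length_of_mem hF, hU⟩), hlen⟩

lemma DerivableIn.uRed (h : DerivableIn P φ k F) (hU : URed P F C) :
    DerivableIn P φ (k + 1) C := by
  obtain ⟨D, hD, hlen⟩ := exists_stepsOK_snoc_of_uRed h hU
  exact ⟨D ++ [C], hD, by simpa using hlen, by simp⟩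

lemma exists_isRefutation_of_uRed (h : DerivableIn P φ k F) (hU : URed P F ∅) :
    ∃ D, IsRefutation P φ D ∧ D.length ≤ k + 1 := by
  obtain ⟨D, hD, hlen⟩ := exists_stepsOK_snoc_of_uRed h hU
  exact ⟨D ++ [∅], ⟨hD, by simp⟩, by simpa using hlen⟩

lemma uRed_erase_of_forall_not_isExist {l : Lit V} (hl : l ∈ C) (hu : IsUniv P l.1)
    (hnl : negLit l ∉ C) (hC : ∀ k ∈ C, ¬ IsExist P k.1) : URed P C (C.erase l) :=
  ⟨l, hu, hl, hnl, rfl, fun k hk he => absurd he (hC k (Finset.mem_of_mem_erase hk))⟩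

end QRes

namespace KBKF

variable {n j m k t : ℕ}

def aBar (m : ℕ) : Clause KV := (Finset.Icc 1 m).image fun i => (KV.a i, false)

def zBar (m n : ℕ) : Clause KV := (Finset.Icc m n).image fun i => (KV.z i, false)

/-- `C_{2n}` after resolving `z₁, …, zₘ` away against `B₂, B₄, …, B_{2m}`. -/
def zElim (n m : ℕ) : Clause KV :=
  insert (KV.x n, true) (insert (KV.a n, false) (aBar m ∪ zBar (m + 1) n))

/-- The resolvent of `ψ_{j+1}` and `C_{2j}` on `y_{j+1}`. -/
def link (j : ℕ) : Clause KV := {(KV.x j, true), (KV.a j, false), (KV.x (j + 1), false)}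

def xOrABar (n j : ℕ) : Clause KV := insert (KV.x j, true) (aBar n)

lemma isExist_x (h₁ : 1 ≤ k) (h₂ : k ≤ n) : IsExist (kPrefix n) (KV.x k) := by
  simp only [IsExist, kPrefix, List.mem_append, List.mem_flatMap, List.mem_range]
  exact Or.inl ⟨k - 1, by omega, by simp [Nat.sub_add_cancel h₁]⟩

lemma isExist_y (h₁ : 1 ≤ k) (h₂ : k ≤ n) : IsExist (kPrefix n) (KV.y k) := by
  simp only [IsExist, kPrefix, List.mem_append, List.mem_flatMap, List.mem_range]
  exact Or.inl ⟨k - 1, by omega, by simp [Nat.sub_add_cancel h₁]⟩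

lemma isExist_z (h₁ : 1 ≤ k) (h₂ : k ≤ n) : IsExist (kPrefix n) (KV.z k) := by
  simp only [IsExist, kPrefix, List.mem_append, List.mem_map, List.mem_range]
  exact Or.inr ⟨k - 1, by omega, by simp [Nat.sub_add_cancel h₁]⟩

lemma isUniv_a (h₁ : 1 ≤ k) (h₂ : k ≤ n) : IsUniv (kPrefix n) (KV.a k) := by
  simp only [IsUniv, kPrefix, List.mem_append, List.mem_flatMap, List.mem_range]
  exact Or.inl ⟨k - 1, by omega, by simp [Nat.sub_add_cancel h₁]⟩

lemma not_isExist_a : ¬ IsExist (kPrefix n) (KV.a k) := by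
  simp [IsExist, kPrefix]

lemma kZneg_eq_zBar : kZneg n = zBar 1 n := by
  ext ⟨v, b⟩
  simp only [kZneg, zBar, Finset.mem_image, Finset.mem_range, Finset.mem_Icc, Prod.mk.injEq]
  constructor
  · rintro ⟨i, hi, rfl, rfl⟩
    exact ⟨i + 1, by omega, rfl, rfl⟩
  · rintro ⟨i, hi, rfl, rfl⟩
    exact ⟨i - 1, by omega, by rw [Nat.sub_add_cancel hi.1], rfl⟩

lemma zElim_zero_mem_kbkf : zElim n 0 ∈ kbkf n := by
  have : zElim n 0 = ({(KV.x n, true), (KV.a n, false)} : Clause KV) ∪ kZneg n := by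
    simp [zElim, aBar, kZneg_eq_zBar]
  simp [kbkf, this]

lemma b_mem_kbkf (h₁ : 1 ≤ k) (h₂ : k ≤ n) :
    ({(KV.a k, false), (KV.z k, true)} : Clause KV) ∈ kbkf n := by
  simp only [kbkf, Finset.mem_union, Finset.mem_image, Finset.mem_range]
  exact Or.inr ⟨k - 1, by omega, by simp [Nat.sub_add_cancel h₁]⟩

lemma c_mem_kbkf (h₁ : 1 ≤ j) (h₂ : j < n) :
    ({(KV.x j, true), (KV.a j, false), (KV.x (j + 1), false), (KV.y (j + 1), false)} : Clause KV)
      ∈ kbkf n := by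
  simp only [kbkf, Finset.mem_union, Finset.mem_image, Finset.mem_range]
  refine Or.inl (Or.inl (Or.inl (Or.inl (Or.inr ⟨j - 1, by omega, ?_⟩))))
  rw [Nat.sub_add_cancel h₁, show j - 1 + 2 = j + 1 by omega]

lemma c_one_mem_kbkf : ({(KV.x 1, false), (KV.y 1, false)} : Clause KV) ∈ kbkf n := by
  simp [kbkf]

lemma psi_mem_kPsi (h₁ : 1 ≤ k) (h₂ : k ≤ n) :
    ({(KV.x k, false), (KV.y k, true)} : Clause KV) ∈ kPsi n := by
  simp only [kPsi, Finset.mem_image, Finset.mem_range]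
  exact ⟨k - 1, by omega, by simp [Nat.sub_add_cancel h₁]⟩

lemma res_b_zElim (h : m < n) :
    ({(KV.a (m + 1), false), (KV.z (m + 1), true)} : Clause KV).erase (KV.z (m + 1), true) ∪
      (zElim n m).erase (KV.z (m + 1), false) = zElim n (m + 1) := by
  ext ⟨v, b⟩
  rcases v with i | i | i | i <;> cases b <;> simp [zElim, aBar, zBar] <;> omega

lemma zElim_self (h : 1 ≤ n) : zElim n n = xOrABar n n := by
  ext ⟨v, b⟩
  rcases v with i | i | i | i <;> cases b <;> simp [zElim, xOrABar, aBar, zBar]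
  omega

lemma res_psi_c (j : ℕ) :
    ({(KV.x (j + 1), false), (KV.y (j + 1), true)} : Clause KV).erase (KV.y (j + 1), true) ∪
      ({(KV.x j, true), (KV.a j, false), (KV.x (j + 1), false), (KV.y (j + 1), false)} :
        Clause KV).erase (KV.y (j + 1), false) = link j := by
  ext ⟨v, b⟩
  rcases v with i | i | i | i <;> cases b <;> simp [link]

lemma res_xOrABar_link (h₁ : 1 ≤ j) (h₂ : j ≤ n) :
    (xOrABar n (j + 1)).erase (KV.x (j + 1), true) ∪ (link j).erase (KV.x (j + 1), false) =
      xOrABar n j := by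
  ext ⟨v, b⟩
  rcases v with i | i | i | i <;> cases b <;> simp [xOrABar, link, aBar]
  omega

lemma res_psi_c_one :
    ({(KV.x 1, false), (KV.y 1, true)} : Clause KV).erase (KV.y 1, true) ∪
      ({(KV.x 1, false), (KV.y 1, false)} : Clause KV).erase (KV.y 1, false) = {(KV.x 1, false)} := by
  decide

lemma res_xOrABar_xBar :
    (xOrABar n 1).erase (KV.x 1, true) ∪ ({(KV.x 1, false)} : Clause KV).erase (KV.x 1, false) =
      aBar n := by
  ext ⟨v, b⟩
  rcases v with i | i | i | i <;> cases b <;> simp [xOrABar, aBar]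

lemma aBar_succ_erase : (aBar (m + 1)).erase (KV.a (m + 1), false) = aBar m := by
  ext ⟨v, b⟩
  rcases v with i | i | i | i <;> cases b <;> simp [aBar]
  omega

lemma not_tauto_zElim : ¬ Tauto (zElim n m) := by
  refine not_tauto_of_forall_snd_eq (fun | KV.x _ => true | _ => false) fun l hl => ?_
  simp only [zElim, aBar, zBar, Finset.mem_insert, Finset.mem_union, Finset.mem_image] at hl
  rcases hl with rfl | rfl | ⟨i, -, rfl⟩ | ⟨i, -, rfl⟩ <;> rfl

lemma not_tauto_link : ¬ Tauto (link j) := by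
  refine not_tauto_of_forall_snd_eq (fun v => decide (v = KV.x j)) fun l hl => ?_
  simp only [link, Finset.mem_insert, Finset.mem_singleton] at hl
  rcases hl with rfl | rfl | rfl <;> simp

lemma not_tauto_xOrABar : ¬ Tauto (xOrABar n j) := by
  refine not_tauto_of_forall_snd_eq (fun | KV.x _ => true | _ => false) fun l hl => ?_
  simp only [xOrABar, aBar, Finset.mem_insert, Finset.mem_image] at hl
  rcases hl with rfl | ⟨i, -, rfl⟩ <;> rfl

lemma not_tauto_aBar : ¬ Tauto (aBar m) := by
  refine not_tauto_of_forall_snd_eq (fun _ => false) fun l hl => ?_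
  obtain ⟨i, -, rfl⟩ := Finset.mem_image.mp hl
  rfl

lemma not_tauto_xBar : ¬ Tauto ({(KV.x 1, false)} : Clause KV) :=
  not_tauto_of_forall_snd_eq (fun _ => false) fun _ hl => by rw [Finset.mem_singleton.mp hl]

lemma derivableIn_zElim (h : m ≤ n) :
    DerivableIn (kPrefix n) (kbkf n ∪ kPsi n) m (zElim n m) := by
  induction m with
  | zero => exact derivableIn_of_mem (Finset.mem_union_left _ zElim_zero_mem_kbkf)
  | succ m ih =>
    have hz : (KV.z (m + 1), false) ∈ zElim n m :=
      Finset.mem_insert_of_mem <| Finset.mem_insert_of_mem <| Finset.mem_union_right _ <|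
        Finset.mem_image_of_mem _ (Finset.mem_Icc.mpr ⟨le_rfl, h⟩)
    exact ((derivableIn_of_mem (Finset.mem_union_left _ (b_mem_kbkf (by omega) h))).res
      (ih (by omega)) ⟨KV.z (m + 1), isExist_z (by omega) h, by simp, hz,
        (res_b_zElim h).symm, not_tauto_zElim⟩).mono (by omega)

lemma derivableIn_link (h₁ : 1 ≤ j) (h₂ : j < n) :
    DerivableIn (kPrefix n) (kbkf n ∪ kPsi n) 1 (link j) :=
  (derivableIn_of_mem (Finset.mem_union_right _ (psi_mem_kPsi (by omega) h₂))).res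
    (derivableIn_of_mem (Finset.mem_union_left _ (c_mem_kbkf h₁ h₂)))
    ⟨KV.y (j + 1), isExist_y (by omega) h₂, by simp, by simp, (res_psi_c j).symm, not_tauto_link⟩

lemma derivableIn_xOrABar (ht : t < n) :
    DerivableIn (kPrefix n) (kbkf n ∪ kPsi n) (n + 2 * t) (xOrABar n (n - t)) := by
  induction t with
  | zero => simpa [← zElim_self (n := n) (by omega)] using derivableIn_zElim le_rfl
  | succ t ih =>
    have hj : n - t = n - (t + 1) + 1 := by omega
    have ih := ih (by omega)
    rw [hj] at ih
    exact (ih.res (derivableIn_link (by omega) (by omega))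
      ⟨KV.x (n - (t + 1) + 1), isExist_x (by omega) (by omega), by simp [xOrABar],
        by simp [link], (res_xOrABar_link (by omega) (by omega)).symm, not_tauto_xOrABar⟩).mono
      (by omega)

lemma derivableIn_aBar (hn : 1 ≤ n) :
    DerivableIn (kPrefix n) (kbkf n ∪ kPsi n) (3 * n) (aBar n) := by
  have hV := derivableIn_xOrABar (n := n) (t := n - 1) (by omega)
  rw [show n - (n - 1) = 1 by omega] at hV
  have hX : DerivableIn (kPrefix n) (kbkf n ∪ kPsi n) 1 {(KV.x 1, false)} :=
    (derivableIn_of_mem (Finset.mem_union_right _ (psi_mem_kPsi le_rfl hn))).res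
      (derivableIn_of_mem (Finset.mem_union_left _ c_one_mem_kbkf))
      ⟨KV.y 1, isExist_y le_rfl hn, by simp, by simp, res_psi_c_one.symm, not_tauto_xBar⟩
  exact (hV.res hX ⟨KV.x 1, isExist_x le_rfl hn, by simp [xOrABar], by simp,
    res_xOrABar_xBar.symm, not_tauto_aBar⟩).mono (by omega)

lemma uRed_aBar_succ (h : m < n) : URed (kPrefix n) (aBar (m + 1)) (aBar m) := by
  rw [← aBar_succ_erase (m := m)]
  refine uRed_erase_of_forall_not_isExist (l := (KV.a (m + 1), false)) (by simp [aBar])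
    (isUniv_a (by omega) h) (by simp [aBar, negLit]) fun l hl => ?_
  obtain ⟨i, -, rfl⟩ := Finset.mem_image.mp hl
  exact not_isExist_a

lemma exists_isRefutation_of_derivableIn_aBar (hm : m < n)
    (h : DerivableIn (kPrefix n) (kbkf n ∪ kPsi n) k (aBar (m + 1))) :
    ∃ D, IsRefutation (kPrefix n) (kbkf n ∪ kPsi n) D ∧ D.length ≤ k + m + 1 := by
  induction m generalizing k with
  | zero => simpa using exists_isRefutation_of_uRed h (by simpa [aBar] using uRed_aBar_succ hm)
  | succ m ih =>
    obtain ⟨D, hD, hlen⟩ := ih (by omega) (h.uRed (uRed_aBar_succ hm))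
    exact ⟨D, hD, by omega⟩

end KBKF

open KBKF in
/-- KBKF_n with symmetry breaker ψₙ has a Q-Res refutation of at
most 4n R/U steps. -/
theorem kbkf_breaker_short_refutation : ∀ n : ℕ, 1 ≤ n →
    ∃ D : List (Clause KV),
      IsRefutation (kPrefix n) (kbkf n ∪ kPsi n) D ∧ D.length ≤ 4 * n := by
  intro n hn
  obtain ⟨D, hD, hlen⟩ := exists_isRefutation_of_derivableIn_aBar (n := n) (m := n - 1) (by omega)
    (by rw [Nat.sub_add_cancel hn]; exact derivableIn_aBar hn)
  exact ⟨D, hD, by omega⟩
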